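/- The k-module (ker 𝛋)/(im 𝛋) is free of rank 1, generated by the class of the identity element 1 ∈ B. (Combined with the computation of the homology of (A, κ), this says that the inclusion of the subcomplex (A, κ) into (B, 𝛋), where A ⊂ B is the subalgebra generated by ξ and ξ̄ with differential κ(ξ) = 0, κ(ξ̄) = ξ, is a quasi-isomorphism.) -/

import Mathlib

open scoped TensorProduct

noncomputable section

/-- The hyperbolic quadratic form `Q(x, y) = x * y` on `k × k`. -/
def hypQ (k : Type*) [CommRing k] : QuadraticForm k (k × k) :=
  QuadraticMap.linMulLin (LinearMap.fst k k k) (LinearMap.snd k k k)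

/-- `E`, the Clifford algebra of the hyperbolic plane over `k`. -/
abbrev CliffE (k : Type*) [CommRing k] := CliffordAlgebra (hypQ k)

/-- `r̄ ∈ E`, the image of the basis vector `(1, 0)`. -/
def rbar (k : Type*) [CommRing k] : CliffE k := CliffordAlgebra.ι (hypQ k) (1, 0)

/-- `ξ̄ ∈ E`, the image of the basis vector `(0, 1)`. -/
def xibar (k : Type*) [CommRing k] : CliffE k := CliffordAlgebra.ι (hypQ k) (0, 1)

/-- `B = k[r, ξ] ⊗ₖ E`. -/
abbrev BB (k : Type*) [CommRing k] := MvPolynomial (Fin 2) k ⊗[k] CliffE k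

/-- `r ∈ B`. -/
def rB (k : Type*) [CommRing k] : BB k := (MvPolynomial.X 0) ⊗ₜ[k] 1

/-- `ξ ∈ B`. -/
def xiB (k : Type*) [CommRing k] : BB k := (MvPolynomial.X 1) ⊗ₜ[k] 1

/-- `r̄ ∈ B`. -/
def rbarB (k : Type*) [CommRing k] : BB k := 1 ⊗ₜ[k] rbar k

/-- `ξ̄ ∈ B`. -/
def xibarB (k : Type*) [CommRing k] : BB k := 1 ⊗ₜ[k] xibar k

/-- `ω = r ξ̄ + ξ r̄ ∈ B`. -/
def omegaB (k : Type*) [CommRing k] : BB k := rB k * xibarB k + xiB k * rbarB k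

/-- `Θ = r ξ ∈ B`. -/
def thetaB (k : Type*) [CommRing k] : BB k := rB k * xiB k

/-- The `ℤ/2`-grading `B = B₀ ⊕ B₁` with `Bᵢ = k[r,ξ] ⊗ Eᵢ`, where `E = E₀ ⊕ E₁` is
the even/odd decomposition of the Clifford algebra `E`. -/
def Bgrade (k : Type*) [CommRing k] (i : ZMod 2) : Submodule k (BB k) :=
  Submodule.span k {z : BB k | ∃ (p : MvPolynomial (Fin 2) k) (e : CliffE k),
    e ∈ CliffordAlgebra.evenOdd (hypQ k) i ∧ z = p ⊗ₜ[k] e}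

/-! `E` is free on `1, r̄, ξ̄, r̄ξ̄`: these span because `r̄` and `ξ̄` map the span into itself, and
they are independent because the representation `r̄ ↦ E₀₁`, `ξ̄ ↦ E₁₀` of `E` on `k²` sends them
to `1, E₀₁, E₁₀, E₀₀`. Hence `B` is free over `k[r, ξ]` on the same elements, and in these
coordinates `𝛋 (q₀, q₁, q₂, q₃) = (r q₁ + ξ q₂, -ξ q₃, r q₃, 0)`: up to signs, the Koszul complex
`q₃ ↦ (q₁, q₂) ↦ q₀` of the regular sequence `r, ξ`. Its only homology is
`k[r, ξ] / (r, ξ) = k` in the `q₀` slot, spanned by the class of `1`. -/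

open MvPolynomial

namespace MvPolynomial
variable {σ R : Type*} [CommRing R]

lemma X_dvd_of_X_dvd_X_mul {i j : σ} (hij : i ≠ j) {p : MvPolynomial σ R}
    (h : X i ∣ X j * p) : X i ∣ p := by
  classical
  rw [← Ideal.mem_span_singleton, ← Set.image_singleton, mem_ideal_span_X_image] at h ⊢
  intro m hm
  obtain ⟨i', rfl, hi'⟩ := h _ (by rw [support_X_mul]; exact Finset.mem_map_of_mem _ hm)
  exact ⟨i', rfl, by simpa [Finsupp.single_apply, hij.symm] using hi'⟩

lemma exists_of_X_mul_add_X_mul_eq_zero {i j : σ} (hij : i ≠ j) {p q : MvPolynomial σ R}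
    (h : X i * p + X j * q = 0) : ∃ r, p = X j * r ∧ q = -(X i * r) := by
  obtain ⟨r, rfl⟩ : X j ∣ p := X_dvd_of_X_dvd_X_mul hij.symm ⟨-q, by linear_combination h⟩
  refine ⟨r, rfl, eq_neg_of_add_eq_zero_left ((isRegular_X (n := j)).left ?_)⟩
  linear_combination h

lemma sub_C_constantCoeff_mem_idealOfVars (p : MvPolynomial σ R) :
    p - C (constantCoeff p) ∈ idealOfVars σ R := by
  rw [← pow_one (idealOfVars σ R), mem_pow_idealOfVars_iff']
  intro m hm
  obtain rfl : m = 0 := by simpa [Nat.lt_one_iff, Finsupp.degree_eq_zero_iff] using hm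
  simp [constantCoeff_eq]

end MvPolynomial

section Clifford
variable (k : Type*) [CommRing k]

lemma rbar_mul_rbar : rbar k * rbar k = 0 := by
  rw [rbar, CliffordAlgebra.ι_sq_scalar, show hypQ k (1, 0) = 0 by simp [hypQ], map_zero]

lemma xibar_mul_xibar : xibar k * xibar k = 0 := by
  rw [xibar, CliffordAlgebra.ι_sq_scalar, show hypQ k (0, 1) = 0 by simp [hypQ], map_zero]

lemma rbar_mul_xibar_add_xibar_mul_rbar : rbar k * xibar k + xibar k * rbar k = 1 := by
  rw [rbar, xibar, CliffordAlgebra.ι_mul_ι_add_swap,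
    show QuadraticMap.polar (hypQ k) (1, 0) (0, 1) = 1 by simp [hypQ, QuadraticMap.polar], map_one]

lemma xibar_mul_rbar : xibar k * rbar k = 1 - rbar k * xibar k :=
  eq_sub_of_add_eq' (rbar_mul_xibar_add_xibar_mul_rbar k)

lemma xibar_mul_rbar_mul_xibar : xibar k * rbar k * xibar k = xibar k := by
  rw [xibar_mul_rbar, sub_mul, one_mul, mul_assoc, xibar_mul_xibar, mul_zero, sub_zero]

lemma rbar_mul_xibar_mul_rbar : rbar k * xibar k * rbar k = rbar k := by
  rw [mul_assoc, xibar_mul_rbar, mul_sub, mul_one, ← mul_assoc, rbar_mul_rbar, zero_mul, sub_zero]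

lemma ι_hypQ_apply (m : k × k) : CliffordAlgebra.ι (hypQ k) m = m.1 • rbar k + m.2 • xibar k := by
  rw [rbar, xibar, ← map_smul, ← map_smul, ← map_add]
  congr 1
  ext <;> simp

def cliffordToMatrix : CliffE k →ₐ[k] Matrix (Fin 2) (Fin 2) k :=
  CliffordAlgebra.lift (hypQ k)
    ⟨(LinearMap.fst k k k).smulRight (Matrix.single 0 1 1) +
      (LinearMap.snd k k k).smulRight (Matrix.single 1 0 1), fun m => by
      ext i j
      fin_cases i <;> fin_cases j <;>
        simp [hypQ, Matrix.mul_apply, Matrix.single,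
          Matrix.algebraMap_matrix_apply, mul_comm]⟩

lemma cliffordToMatrix_rbar : cliffordToMatrix k (rbar k) = Matrix.single 0 1 1 := by
  simp [cliffordToMatrix, rbar]

lemma cliffordToMatrix_xibar : cliffordToMatrix k (xibar k) = Matrix.single 1 0 1 := by
  simp [cliffordToMatrix, xibar]

def basisVecE : Fin 4 → CliffE k := ![1, rbar k, xibar k, rbar k * xibar k]

lemma linearIndependent_basisVecE : LinearIndependent k (basisVecE k) := by
  refine LinearIndependent.of_comp (cliffordToMatrix k).toLinearMap ?_
  rw [Fintype.linearIndependent_iff]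
  intro g hg
  have hsum : ∑ i, g i • cliffordToMatrix k (basisVecE k i) = !![g 0 + g 3, g 1; g 2, g 0] := by
    ext i j
    fin_cases i <;> fin_cases j <;>
      simp [Fin.sum_univ_four, basisVecE, cliffordToMatrix_rbar, cliffordToMatrix_xibar,
        Matrix.single, Matrix.mul_apply]
  simp only [Function.comp_apply, AlgHom.toLinearMap_apply, hsum] at hg
  have h₀₀ : g 0 + g 3 = 0 := congrFun₂ hg 0 0
  have h₁₁ : g 0 = 0 := congrFun₂ hg 1 1
  intro i
  fin_cases i
  · exact h₁₁
  · exact congrFun₂ hg 0 1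
  · exact congrFun₂ hg 1 0
  · simpa [h₁₁] using h₀₀

lemma span_basisVecE : Submodule.span k (Set.range (basisVecE k)) = ⊤ := by
  set S := Submodule.span k (Set.range (basisVecE k))
  have mem_one : (1 : CliffE k) ∈ S := Submodule.subset_span ⟨0, rfl⟩
  have mem_rbar : rbar k ∈ S := Submodule.subset_span ⟨1, rfl⟩
  have mem_xibar : xibar k ∈ S := Submodule.subset_span ⟨2, rfl⟩
  have mem_rbar_mul_xibar : rbar k * xibar k ∈ S := Submodule.subset_span ⟨3, rfl⟩
  have mul_mem {a : CliffE k} (ha : ∀ i, a * basisVecE k i ∈ S) {x : CliffE k} (hx : x ∈ S) :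
      a * x ∈ S :=
    Submodule.span_le (p := S.comap (LinearMap.mulLeft k a)) |>.2 (Set.range_subset_iff.2 ha) hx
  have rbar_mul (i : Fin 4) : rbar k * basisVecE k i ∈ S := by
    fin_cases i <;> simp [basisVecE, rbar_mul_rbar, ← mul_assoc, mem_rbar, mem_rbar_mul_xibar]
  have xibar_mul (i : Fin 4) : xibar k * basisVecE k i ∈ S := by
    fin_cases i <;> simp [basisVecE, xibar_mul_xibar, xibar_mul_rbar, mem_xibar,
      (mul_assoc _ _ _).symm.trans (xibar_mul_rbar_mul_xibar k),
      S.sub_mem mem_one mem_rbar_mul_xibar]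
  rw [eq_top_iff]
  rintro x -
  induction x using CliffordAlgebra.left_induction with
  | algebraMap r =>
    rw [Algebra.algebraMap_eq_smul_one]
    exact S.smul_mem r mem_one
  | add x y hx hy => exact S.add_mem hx hy
  | ι_mul x m hx =>
    rw [ι_hypQ_apply, add_mul, smul_mul_assoc, smul_mul_assoc]
    exact S.add_mem (S.smul_mem _ (mul_mem rbar_mul hx)) (S.smul_mem _ (mul_mem xibar_mul hx))

def basisE : Module.Basis (Fin 4) k (CliffE k) :=
  Module.Basis.mk (linearIndependent_basisVecE k) (span_basisVecE k).ge

def basisB : Module.Basis (Fin 4) (MvPolynomial (Fin 2) k) (BB k) :=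
  Algebra.TensorProduct.basis _ (basisE k)

end Clifford

section Coordinates
variable {k : Type*} [CommRing k]

def ofCoords (q₀ q₁ q₂ q₃ : MvPolynomial (Fin 2) k) : BB k :=
  q₀ ⊗ₜ 1 + q₁ ⊗ₜ rbar k + q₂ ⊗ₜ xibar k + q₃ ⊗ₜ (rbar k * xibar k)

lemma ofCoords_eq_basisB_equivFun_symm (q₀ q₁ q₂ q₃ : MvPolynomial (Fin 2) k) :
    ofCoords q₀ q₁ q₂ q₃ = (basisB k).equivFun.symm ![q₀, q₁, q₂, q₃] := by
  simp [ofCoords, basisB, Module.Basis.equivFun_symm_apply, Fin.sum_univ_four, basisE, basisVecE,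
    TensorProduct.smul_tmul']

lemma exists_eq_ofCoords (b : BB k) : ∃ q₀ q₁ q₂ q₃, b = ofCoords q₀ q₁ q₂ q₃ := by
  set c := (basisB k).equivFun b
  refine ⟨c 0, c 1, c 2, c 3, ?_⟩
  rw [ofCoords_eq_basisB_equivFun_symm, ← (basisB k).equivFun.symm_apply_apply b]
  congr 1
  ext i
  fin_cases i <;> rfl

lemma ofCoords_inj {a₀ a₁ a₂ a₃ b₀ b₁ b₂ b₃ : MvPolynomial (Fin 2) k} :
    ofCoords a₀ a₁ a₂ a₃ = ofCoords b₀ b₁ b₂ b₃ ↔ a₀ = b₀ ∧ a₁ = b₁ ∧ a₂ = b₂ ∧ a₃ = b₃ := by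
  rw [ofCoords_eq_basisB_equivFun_symm, ofCoords_eq_basisB_equivFun_symm,
    (basisB k).equivFun.symm.injective.eq_iff]
  simp [Matrix.vecCons_inj]

lemma ofCoords_add (a₀ a₁ a₂ a₃ b₀ b₁ b₂ b₃ : MvPolynomial (Fin 2) k) :
    ofCoords a₀ a₁ a₂ a₃ + ofCoords b₀ b₁ b₂ b₃ =
      ofCoords (a₀ + b₀) (a₁ + b₁) (a₂ + b₂) (a₃ + b₃) := by
  simp only [ofCoords, TensorProduct.add_tmul]
  abel

lemma ofCoords_zero : ofCoords (0 : MvPolynomial (Fin 2) k) 0 0 0 = 0 := by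
  simp [ofCoords]

lemma smul_one_eq_ofCoords (c : k) : c • (1 : BB k) = ofCoords (C c) 0 0 0 := by
  simp [ofCoords, Algebra.TensorProduct.one_def, TensorProduct.smul_tmul', smul_eq_C_mul]

end Coordinates

section Differential
variable {k : Type*} [CommRing k]

lemma tmul_mem_Bgrade {i : ZMod 2} (p : MvPolynomial (Fin 2) k) {e : CliffE k}
    (he : e ∈ CliffordAlgebra.evenOdd (hypQ k) i) : p ⊗ₜ[k] e ∈ Bgrade k i :=
  Submodule.subset_span ⟨p, e, he, rfl⟩

lemma omegaB_mul_tmul (p : MvPolynomial (Fin 2) k) (e : CliffE k) :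
    omegaB k * p ⊗ₜ e = (X 0 * p) ⊗ₜ (xibar k * e) + (X 1 * p) ⊗ₜ (rbar k * e) := by
  simp [omegaB, rB, xiB, rbarB, xibarB, add_mul, Algebra.TensorProduct.tmul_mul_tmul]

lemma tmul_mul_omegaB (p : MvPolynomial (Fin 2) k) (e : CliffE k) :
    p ⊗ₜ e * omegaB k = (X 0 * p) ⊗ₜ (e * xibar k) + (X 1 * p) ⊗ₜ (e * rbar k) := by
  simp [omegaB, rB, xiB, rbarB, xibarB, mul_add, Algebra.TensorProduct.tmul_mul_tmul, mul_comm p]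

variable {κB : BB k →ₗ[k] BB k}

lemma kappa_tmul_of_even (h0 : ∀ b ∈ Bgrade k 0, κB b = omegaB k * b - b * omegaB k)
    (p : MvPolynomial (Fin 2) k) {e : CliffE k} (he : e ∈ CliffordAlgebra.evenOdd (hypQ k) 0) :
    κB (p ⊗ₜ e) =
      (X 0 * p) ⊗ₜ (xibar k * e - e * xibar k) + (X 1 * p) ⊗ₜ (rbar k * e - e * rbar k) := by
  rw [h0 _ (tmul_mem_Bgrade p he), omegaB_mul_tmul, tmul_mul_omegaB, TensorProduct.tmul_sub,
    TensorProduct.tmul_sub]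
  abel

lemma kappa_tmul_of_odd (h1 : ∀ b ∈ Bgrade k 1, κB b = omegaB k * b + b * omegaB k)
    (p : MvPolynomial (Fin 2) k) {e : CliffE k} (he : e ∈ CliffordAlgebra.evenOdd (hypQ k) 1) :
    κB (p ⊗ₜ e) =
      (X 0 * p) ⊗ₜ (xibar k * e + e * xibar k) + (X 1 * p) ⊗ₜ (rbar k * e + e * rbar k) := by
  rw [h1 _ (tmul_mem_Bgrade p he), omegaB_mul_tmul, tmul_mul_omegaB, TensorProduct.tmul_add,
    TensorProduct.tmul_add]
  abel

lemma kappa_ofCoords (h0 : ∀ b ∈ Bgrade k 0, κB b = omegaB k * b - b * omegaB k)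
    (h1 : ∀ b ∈ Bgrade k 1, κB b = omegaB k * b + b * omegaB k)
    (q₀ q₁ q₂ q₃ : MvPolynomial (Fin 2) k) :
    κB (ofCoords q₀ q₁ q₂ q₃) = ofCoords (X 0 * q₁ + X 1 * q₂) (-(X 1 * q₃)) (X 0 * q₃) 0 := by
  have even_one : (1 : CliffE k) ∈ CliffordAlgebra.evenOdd (hypQ k) 0 :=
    SetLike.one_mem_graded _
  have odd_rbar : rbar k ∈ CliffordAlgebra.evenOdd (hypQ k) 1 :=
    CliffordAlgebra.ι_mem_evenOdd_one _ _
  have odd_xibar : xibar k ∈ CliffordAlgebra.evenOdd (hypQ k) 1 :=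
    CliffordAlgebra.ι_mem_evenOdd_one _ _
  have even_w : rbar k * xibar k ∈ CliffordAlgebra.evenOdd (hypQ k) 0 :=
    CliffordAlgebra.ι_mul_ι_mem_evenOdd_zero _ _ _
  simp only [ofCoords, map_add, kappa_tmul_of_even h0 _ even_one, kappa_tmul_of_odd h1 _ odd_rbar,
    kappa_tmul_of_odd h1 _ odd_xibar, kappa_tmul_of_even h0 _ even_w]
  simp only [mul_one, one_mul, sub_self, TensorProduct.tmul_zero, add_zero, zero_add, mul_zero,
    zero_mul, sub_zero, zero_sub, rbar_mul_rbar, xibar_mul_xibar, add_comm (xibar k * rbar k),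
    rbar_mul_xibar_add_xibar_mul_rbar, xibar_mul_rbar_mul_xibar, rbar_mul_xibar_mul_rbar,
    ← mul_assoc, mul_assoc _ (xibar k) (xibar k), TensorProduct.add_tmul, TensorProduct.tmul_neg,
    TensorProduct.neg_tmul, TensorProduct.zero_tmul]
  abel

end Differential

/-- The `k`-module `(ker 𝛋)/(im 𝛋)` is free of rank 1, generated by the class of
the identity element `1 ∈ B`: the identity is a cycle, every cycle is congruent
modulo boundaries to a unique multiple of `1`. -/
theorem stmt_8 (k : Type*) [CommRing k] (κB : BB k →ₗ[k] BB k)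
    (h0 : ∀ b ∈ Bgrade k 0, κB b = omegaB k * b - b * omegaB k)
    (h1 : ∀ b ∈ Bgrade k 1, κB b = omegaB k * b + b * omegaB k) :
    κB 1 = 0 ∧
    (∀ b : BB k, κB b = 0 →
      ∃ (c : k) (y : BB k), b = c • (1 : BB k) + κB y) ∧
    (∀ c : k, (∃ y : BB k, c • (1 : BB k) = κB y) → c = 0) := by
  have κ_ofCoords := kappa_ofCoords h0 h1
  refine ⟨?_, fun b hb => ?_, fun c ⟨y, hy⟩ => ?_⟩
  · rw [← one_smul k (1 : BB k), smul_one_eq_ofCoords, κ_ofCoords]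
    simp [ofCoords_zero]
  · obtain ⟨p₀, p₁, p₂, p₃, rfl⟩ := exists_eq_ofCoords b
    rw [κ_ofCoords, ← ofCoords_zero, ofCoords_inj] at hb
    obtain ⟨h₁₂, -, h₃, -⟩ := hb
    obtain ⟨q, rfl, rfl⟩ := exists_of_X_mul_add_X_mul_eq_zero (by decide : (0 : Fin 2) ≠ 1) h₁₂
    obtain rfl : p₃ = 0 := (isRegular_X (n := 0)).left (by simpa using h₃)
    obtain ⟨a, ha⟩ := (Submodule.mem_span_range_iff_exists_fun _).1
      (sub_C_constantCoeff_mem_idealOfVars p₀)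
    rw [Fin.sum_univ_two, smul_eq_mul, smul_eq_mul] at ha
    refine ⟨constantCoeff p₀, ofCoords 0 (a 0) (a 1) (-q), ?_⟩
    rw [κ_ofCoords, smul_one_eq_ofCoords, ofCoords_add, ofCoords_inj]
    refine ⟨by linear_combination -ha, by ring, by ring, by ring⟩
  · obtain ⟨q₀, q₁, q₂, q₃, rfl⟩ := exists_eq_ofCoords y
    rw [smul_one_eq_ofCoords, κ_ofCoords, ofCoords_inj] at hy
    simpa using congrArg constantCoeff hy.1
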